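/- Let Ω1 and Ω2 be finite multisets of solution mappings that are both domain-uniform, and let F be a selection formula. Then, writing J = Ω1 ⋈ Ω2 and E = σ_F(J) ∪ ( J \ σ_{F ∨ ¬F}(J) ), the left-join satisfies Ω1 ⟕_F Ω2 = σ_F(J) ∪ ( Ω1 \ E ) as an equality of multisets. In other words, the left-join operator of the W3C SPARQL algebra is expressible using only join, selection, union and simple difference. -/
import Mathlib


open scoped Classical

noncomputable section

/-- A solution mapping: a finite partial function from variables to terms. -/
abbrev SMap (V T : Type) := Finmap (fun _ : V => T)

variable {V T : Type} [DecidableEq V] [DecidableEq T]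

/-- Two solution mappings are compatible if they agree on the
intersection of their domains. -/
def Compat (μ1 μ2 : SMap V T) : Prop :=
  ∀ x ∈ μ1, x ∈ μ2 → μ1.lookup x = μ2.lookup x

/-- Join of two multisets of solution mappings: unions of compatible pairs,
multiplicities multiply and add over all decompositions. -/
def mjoin (Ω1 Ω2 : Multiset (SMap V T)) : Multiset (SMap V T) :=
  Ω1.bind fun μ1 => (Ω2.filter fun μ2 => Compat μ1 μ2).map fun μ2 => μ1 ∪ μ2

/-- Simple difference: keep (with multiplicity) the mappings of `Ω1`
incompatible with every element of `Ω2`. -/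
def msdiff (Ω1 Ω2 : Multiset (SMap V T)) : Multiset (SMap V T) :=
  Ω1.filter fun μ1 => ∀ μ2 ∈ Ω2, ¬ Compat μ1 μ2

/-- SPARQL minus: keep (with multiplicity) the mappings of `Ω1` such that every
element of `Ω2` is incompatible with it or has disjoint domain. -/
def sminus (Ω1 Ω2 : Multiset (SMap V T)) : Multiset (SMap V T) :=
  Ω1.filter fun μ1 => ∀ μ2 ∈ Ω2, ¬ Compat μ1 μ2 ∨ μ1.keys ∩ μ2.keys = ∅

/-- Domain of a multiset of mappings: the union of the domains of its elements. -/
def mdom (Ω : Multiset (SMap V T)) : Finset V := (Ω.map Finmap.keys).sup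

/-- A multiset of mappings is domain-uniform when all its elements have the
same domain. -/
def DomUniform (Ω : Multiset (SMap V T)) : Prop :=
  ∀ μ1 ∈ Ω, ∀ μ2 ∈ Ω, Finmap.keys μ1 = Finmap.keys μ2

/-- Three truth values: true, false, error. -/
inductive TV where | t | f | e
deriving DecidableEq

/-- Strong Kleene conjunction. -/
def TV.andTV : TV → TV → TV
  | .t, q => q
  | .f, _ => .f
  | .e, .t => .e
  | .e, .f => .f
  | .e, .e => .e

/-- Strong Kleene disjunction. -/
def TV.orTV : TV → TV → TV
  | .t, _ => .t
  | .f, q => q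
  | .e, .t => .t
  | .e, .f => .e
  | .e, .e => .e

/-- Three-valued negation. -/
def TV.notTV : TV → TV
  | .t => .f
  | .f => .t
  | .e => .e

/-- Selection formulas, built from atoms `x = c`, `x = y` and `bound x`. -/
inductive SForm (V T : Type) where
  | eqc : V → T → SForm V T
  | eqv : V → V → SForm V T
  | bound : V → SForm V T
  | fand : SForm V T → SForm V T → SForm V T
  | for' : SForm V T → SForm V T → SForm V T
  | fnot : SForm V T → SForm V T

/-- Three-valued evaluation of a selection formula on a solution mapping. -/
def evalF (μ : SMap V T) : SForm V T → TV
  | .eqc x c =>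
    match μ.lookup x with
    | some a => if a = c then .t else .f
    | none => .e
  | .eqv x y =>
    match μ.lookup x, μ.lookup y with
    | some a, some b => if a = b then .t else .f
    | some _, none => .e
    | none, _ => .e
  | .bound x => if x ∈ μ then .t else .f
  | .fand F1 F2 => (evalF μ F1).andTV (evalF μ F2)
  | .for' F1 F2 => (evalF μ F1).orTV (evalF μ F2)
  | .fnot F1 => (evalF μ F1).notTV

/-- Selection: keep (with multiplicity) the mappings evaluating `F` to true. -/
def sel (F : SForm V T) (Ω : Multiset (SMap V T)) : Multiset (SMap V T) :=
  Ω.filter fun μ => evalF μ F = .t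

/-- W3C difference: keep (with multiplicity) the mappings `μ1` of `Ω1` such that
every `μ2 ∈ Ω2` is incompatible with `μ1`, or compatible with
`(μ1 ∪ μ2)(F) = false`. -/
def wdiff (F : SForm V T) (Ω1 Ω2 : Multiset (SMap V T)) : Multiset (SMap V T) :=
  Ω1.filter fun μ1 => ∀ μ2 ∈ Ω2,
    ¬ Compat μ1 μ2 ∨ (Compat μ1 μ2 ∧ evalF (μ1 ∪ μ2) F = .f)

end

/-- Left-join of the W3C SPARQL algebra. -/
noncomputable def leftjoin {V T : Type} [DecidableEq V] [DecidableEq T]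
    (F : SForm V T) (Ω1 Ω2 : Multiset (SMap V T)) : Multiset (SMap V T) :=
  sel F (mjoin Ω1 Ω2) + wdiff F Ω1 Ω2


section AuxLemmas
variable {V T : Type} [DecidableEq V] [DecidableEq T]

lemma compat_refl (μ : SMap V T) : Compat μ μ := fun _ _ _ => rfl

lemma compat_union_left (μ1 μ2 : SMap V T) : Compat μ1 (μ1 ∪ μ2) :=
  fun x hx _ => (Finmap.lookup_union_left hx).symm

lemma eq_of_keys_eq_compat {μ ν : SMap V T} (hk : μ.keys = ν.keys)
    (hc : Compat μ ν) : μ = ν := by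
  apply Finmap.ext_lookup
  intro x
  by_cases hx : x ∈ μ
  · exact hc x hx (Finmap.mem_keys.1 (hk ▸ Finmap.mem_keys.2 hx))
  · have hxν : x ∉ ν := fun h => hx (Finmap.mem_keys.1 (hk ▸ Finmap.mem_keys.2 h))
    rw [Finmap.lookup_eq_none.2 hx, Finmap.lookup_eq_none.2 hxν]

lemma mem_mjoin {Ω1 Ω2 : Multiset (SMap V T)} {ν : SMap V T} :
    ν ∈ mjoin Ω1 Ω2 ↔ ∃ μ1 ∈ Ω1, ∃ μ2 ∈ Ω2, Compat μ1 μ2 ∧ ν = μ1 ∪ μ2 := by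
  simp only [mjoin, Multiset.mem_bind, Multiset.mem_map, Multiset.mem_filter]
  constructor
  · rintro ⟨μ1, h1, μ2, ⟨h2, hc⟩, rfl⟩
    exact ⟨μ1, h1, μ2, h2, hc, rfl⟩
  · rintro ⟨μ1, h1, μ2, h2, hc, rfl⟩
    exact ⟨μ1, h1, μ2, ⟨h2, hc⟩, rfl⟩

lemma eval_taut (μ : SMap V T) (F : SForm V T) :
    evalF μ (SForm.for' F (SForm.fnot F)) = .t ↔ evalF μ F ≠ TV.e := by
  show (evalF μ F).orTV (evalF μ F).notTV = .t ↔ _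
  cases evalF μ F <;> simp [TV.orTV, TV.notTV]

lemma union_eq_of_compat {μ1 μ1' μ2 : SMap V T} (hk : μ1.keys = μ1'.keys)
    (hc' : Compat μ1' μ2) (hcν : Compat μ1 (μ1' ∪ μ2)) :
    Compat μ1 μ2 ∧ μ1 ∪ μ2 = μ1' ∪ μ2 := by
  have hmem : ∀ x, x ∈ μ1 ↔ x ∈ μ1' := by
    intro x
    rw [← Finmap.mem_keys, ← Finmap.mem_keys, hk]
  have hl : ∀ x ∈ μ1, μ1.lookup x = μ1'.lookup x := by
    intro x hx
    have hx' : x ∈ μ1' := (hmem x).1 hx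
    have := hcν x hx (Finmap.mem_union.2 (Or.inl hx'))
    rwa [Finmap.lookup_union_left hx'] at this
  constructor
  · intro x hx hx2
    have hx' : x ∈ μ1' := (hmem x).1 hx
    rw [hl x hx]
    exact hc' x hx' hx2
  · apply Finmap.ext_lookup
    intro x
    by_cases hx : x ∈ μ1
    · have hx' : x ∈ μ1' := (hmem x).1 hx
      rw [Finmap.lookup_union_left hx, Finmap.lookup_union_left hx', hl x hx]
    · have hx' : x ∉ μ1' := fun h => hx ((hmem x).2 h)
      rw [Finmap.lookup_union_right hx, Finmap.lookup_union_right hx']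

lemma keys_mjoin {Ω1 Ω2 : Multiset (SMap V T)} (h1 : DomUniform Ω1)
    (h2 : DomUniform Ω2) {ν ρ : SMap V T} (hν : ν ∈ mjoin Ω1 Ω2)
    (hρ : ρ ∈ mjoin Ω1 Ω2) : ν.keys = ρ.keys := by
  obtain ⟨a, ha, b, hb, -, rfl⟩ := mem_mjoin.1 hν
  obtain ⟨c, hc, d, hd, -, rfl⟩ := mem_mjoin.1 hρ
  rw [Finmap.keys_union, Finmap.keys_union, h1 a ha c hc, h2 b hb d hd]

end AuxLemmas

/-- the left-join is expressible with join, selection, union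
(multiset sum) and simple difference, for domain-uniform operands. -/
theorem stmt_2 {V T : Type} [DecidableEq V] [DecidableEq T]
    (Ω1 Ω2 : Multiset (SMap V T)) (F : SForm V T)
    (h1 : DomUniform Ω1) (h2 : DomUniform Ω2) :
    leftjoin F Ω1 Ω2 =
      sel F (mjoin Ω1 Ω2) +
        msdiff Ω1
          (sel F (mjoin Ω1 Ω2) +
            msdiff (mjoin Ω1 Ω2) (sel (SForm.for' F (SForm.fnot F)) (mjoin Ω1 Ω2))) := by
  unfold leftjoin
  congr 1
  unfold wdiff msdiff
  apply Multiset.filter_congr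
  intro μ1 hμ1
  constructor
  · intro h ν hν hcν
    have hνJ : ν ∈ mjoin Ω1 Ω2 := by
      rcases Multiset.mem_add.1 hν with hν' | hν'
      · exact (Multiset.mem_filter.1 hν').1
      · exact (Multiset.mem_filter.1 hν').1
    obtain ⟨μ1', hμ1', μ2, hμ2, hc', rfl⟩ := mem_mjoin.1 hνJ
    have hk : μ1.keys = μ1'.keys := h1 μ1 hμ1 μ1' hμ1'
    obtain ⟨hc12, hun⟩ := union_eq_of_compat hk hc' hcν
    have hf : evalF (μ1' ∪ μ2) F = .f := by
      rcases h μ2 hμ2 with hnc | ⟨-, hf⟩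
      · exact absurd hc12 hnc
      · rwa [hun] at hf
    rcases Multiset.mem_add.1 hν with hν' | hν'
    · have := (Multiset.mem_filter.1 hν').2
      rw [hf] at this
      exact TV.noConfusion this
    · have hall := (Multiset.mem_filter.1 hν').2
      have hsel : (μ1' ∪ μ2) ∈ sel (SForm.for' F (SForm.fnot F)) (mjoin Ω1 Ω2) := by
        refine Multiset.mem_filter.2 ⟨hνJ, ?_⟩
        rw [eval_taut, hf]
        exact fun h => TV.noConfusion h
      exact hall _ hsel (compat_refl _)
  · intro h μ2 hμ2
    by_cases hc : Compat μ1 μ2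
    · right
      refine ⟨hc, ?_⟩
      have hνJ : μ1 ∪ μ2 ∈ mjoin Ω1 Ω2 :=
        mem_mjoin.2 ⟨μ1, hμ1, μ2, hμ2, hc, rfl⟩
      have hcν : Compat μ1 (μ1 ∪ μ2) := compat_union_left μ1 μ2
      cases heval : evalF (μ1 ∪ μ2) F with
      | f => rfl
      | t =>
        exact absurd hcν (h _ (Multiset.mem_add.2 (Or.inl
          (Multiset.mem_filter.2 ⟨hνJ, heval⟩))))
      | e =>
        refine absurd hcν (h _ (Multiset.mem_add.2 (Or.inr
          (Multiset.mem_filter.2 ⟨hνJ, ?_⟩))))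
        intro ρ hρ hcρ
        have hρJ : ρ ∈ mjoin Ω1 Ω2 := (Multiset.mem_filter.1 hρ).1
        have hρt := (Multiset.mem_filter.1 hρ).2
        have hk : (μ1 ∪ μ2).keys = ρ.keys := keys_mjoin h1 h2 hνJ hρJ
        have := eq_of_keys_eq_compat hk hcρ
        rw [← this, eval_taut, heval] at hρt
        exact hρt rfl
    · exact Or.inl hc
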